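/- arXiv:1909.08403 — 4 statements merged into one kernel-verified Lean document; each statement's English description precedes it below -/
import Mathlib

section
/- Let A : dom(A) ⊆ H₀ → H₁ be a densely defined, closed, linear operator between Hilbert spaces. Then A : dom(A) ⊆ H₀ → H^{-1}(|A*|+1) is bounded (with respect to the H₀-norm on dom(A)), and hence possesses a unique bounded extension to all of H₀. -/
open MeasureTheory

local notation "⟪" x ", " y "⟫" => @inner ℂ _ _ x y

/-- Let `A : dom(A) ⊆ H₀ → H₁` be densely defined, closed and linear between Hilbert
spaces.  Let `B = |A*| = √(AA*)` (characterised as the nonnegative selfadjoint operator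
with `dom B = dom A*` and `‖By‖ = ‖A*y‖`), and let `R = (|A*|+1)^{-1}` (the bounded
inverse of `B + 1`).  Then `A : dom(A) ⊆ H₀ → H^{-1}(|A*|+1)` is bounded, i.e. there is
`c > 0` with `‖A x‖_{H^{-1}(|A*|+1)} = ‖R (A x)‖ ≤ c ‖x‖` for all `x ∈ dom A`;
hence `A` possesses a unique bounded extension to `H₀`. -/
theorem pmap_bounded_into_extrapolation
    {H₀ H₁ : Type*} [NormedAddCommGroup H₀] [InnerProductSpace ℂ H₀] [CompleteSpace H₀]
    [NormedAddCommGroup H₁] [InnerProductSpace ℂ H₁] [CompleteSpace H₁]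
    (A : H₀ →ₗ.[ℂ] H₁) (hdense : Dense (A.domain : Set H₀))
    (hclosed : IsClosed (A.graph : Set (H₀ × H₁)))
    (B : H₁ →ₗ.[ℂ] H₁) (hBsa : B.adjoint = B)
    (hBdom : B.domain = A.adjoint.domain)
    (hBpos : ∀ y : B.domain, 0 ≤ (⟪B y, (y : H₁)⟫ : ℂ).re)
    (hBnorm : ∀ (y : H₁) (hy : y ∈ B.domain) (hy' : y ∈ A.adjoint.domain),
      ‖B ⟨y, hy⟩‖ = ‖A.adjoint ⟨y, hy'⟩‖)
    (R : H₁ →L[ℂ] H₁)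
    (hR1 : ∀ (y : H₁) (hy : y ∈ B.domain), R (B ⟨y, hy⟩ + y) = y)
    (hR2 : ∀ z : H₁, ∃ hz : R z ∈ B.domain, B ⟨R z, hz⟩ + R z = z) :
    ∃ c > (0:ℝ), ∀ (x : H₀) (hx : x ∈ A.domain), ‖R (A ⟨x, hx⟩)‖ ≤ c * ‖x‖ := by
  -- `B.domain` is dense
  have hBdense : Dense (B.domain : Set H₁) := by
    rw [Submodule.dense_iff_topologicalClosure_eq_top,
      Submodule.topologicalClosure_eq_top_iff, Submodule.eq_bot_iff]
    intro v hv
    obtain ⟨hz, hzeq⟩ := hR2 v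
    set y := R v with hy
    have h0 : ⟪(y : H₁), v⟫ = 0 := Submodule.inner_right_of_mem_orthogonal hz hv
    rw [← hzeq, inner_add_right] at h0
    have h2 : (0:ℝ) ≤ (⟪(y : H₁), B ⟨y, hz⟩⟫ : ℂ).re := by
      have := hBpos ⟨y, hz⟩
      rwa [← inner_conj_symm, Complex.conj_re] at this
    have h3 : (⟪(y : H₁), (y : H₁)⟫ : ℂ).re = ‖y‖ ^ 2 := by
      have := inner_self_eq_norm_sq (𝕜 := ℂ) y
      simpa using this
    have h0re := congrArg Complex.re h0
    rw [Complex.add_re, h3] at h0re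
    simp only [Complex.zero_re] at h0re
    have hy0 : ‖y‖ ^ 2 = 0 := by nlinarith [sq_nonneg ‖y‖]
    have hRv : y = 0 := norm_eq_zero.mp ((pow_eq_zero_iff (two_ne_zero)).mp hy0)
    rw [← hzeq]
    have hz0 : (⟨y, hz⟩ : B.domain) = 0 := by ext; exact hRv
    rw [hz0]
    simpa using hRv
  -- symmetry of `B`
  have hsymm : ∀ u v : B.domain, ⟪B u, (v : H₁)⟫ = ⟪(u : H₁), B v⟫ := by
    have h := B.adjoint_isFormalAdjoint hBdense
    rw [hBsa] at h
    exact h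
  -- `R` is selfadjoint
  have hRsa : ∀ u v : H₁, ⟪R u, v⟫ = ⟪u, R v⟫ := by
    intro u v
    obtain ⟨hu, hueq⟩ := hR2 u
    obtain ⟨hv, hveq⟩ := hR2 v
    conv_lhs => rw [← hveq]
    conv_rhs => rw [← hueq]
    rw [inner_add_right, inner_add_left, hsymm ⟨R u, hu⟩ ⟨R v, hv⟩]
  -- `‖B (R z)‖ ≤ ‖z‖`
  have hBR : ∀ (z : H₁) (hz : R z ∈ B.domain), ‖B ⟨R z, hz⟩‖ ≤ ‖z‖ := by
    intro z hz
    obtain ⟨hz', hzeq⟩ := hR2 z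
    have hB2 : B ⟨R z, hz⟩ = B ⟨R z, hz'⟩ := rfl
    have hsq : ‖z‖ ^ 2 = ‖B ⟨R z, hz'⟩‖ ^ 2
        + 2 * (⟪B ⟨R z, hz'⟩, (R z : H₁)⟫ : ℂ).re + ‖R z‖ ^ 2 := by
      conv_lhs => rw [← hzeq]
      exact norm_add_sq (𝕜 := ℂ) _ _
    have hp := hBpos ⟨R z, hz'⟩
    have := sq_nonneg ‖R z‖
    rw [hB2]
    nlinarith [norm_nonneg (B ⟨R z, hz'⟩), norm_nonneg z]
  -- adjoint identity for `A`
  have hAadj := A.adjoint_isFormalAdjoint hdense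
  refine ⟨1, one_pos, fun x hx => ?_⟩
  set z := A ⟨x, hx⟩ with hzdef
  obtain ⟨hw, hweq⟩ := hR2 (R z)
  have hw' : R (R z) ∈ A.adjoint.domain := hBdom ▸ hw
  have key : (⟪(R z : H₁), R z⟫ : ℂ) = ⟪(x : H₀), A.adjoint ⟨R (R z), hw'⟩⟫ := by
    rw [hRsa z (R z)]
    have := hAadj ⟨R (R z), hw'⟩ ⟨x, hx⟩
    rw [← inner_conj_symm, ← this, inner_conj_symm]
  have h1 : ‖R z‖ ^ 2 ≤ ‖x‖ * ‖A.adjoint ⟨R (R z), hw'⟩‖ := by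
    rw [← inner_self_eq_norm_sq (𝕜 := ℂ), key]
    calc (⟪(x : H₀), A.adjoint ⟨R (R z), hw'⟩⟫ : ℂ).re
        ≤ ‖(⟪(x : H₀), A.adjoint ⟨R (R z), hw'⟩⟫ : ℂ)‖ := Complex.re_le_norm _
      _ ≤ ‖x‖ * ‖A.adjoint ⟨R (R z), hw'⟩‖ := norm_inner_le_norm _ _
  have h2 : ‖A.adjoint ⟨R (R z), hw'⟩‖ ≤ ‖R z‖ := by
    rw [← hBnorm _ hw hw']
    exact hBR (R z) hw
  have h3 : ‖R z‖ ^ 2 ≤ ‖x‖ * ‖R z‖ := by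
    calc ‖R z‖ ^ 2 ≤ ‖x‖ * ‖A.adjoint ⟨R (R z), hw'⟩‖ := h1
      _ ≤ ‖x‖ * ‖R z‖ := by
          exact mul_le_mul_of_nonneg_left h2 (norm_nonneg _)
  rw [one_mul]
  nlinarith [norm_nonneg (R z), norm_nonneg x]
end

section
/- Cut-off integration-by-parts formula: let ρ > 0, t ∈ ℝ, H a Hilbert space. For every f ∈ L_{2,ρ}(ℝ;H), in H^{-1}_ρ(ℝ;H) one has χ_{[t,∞)}(m) f = ∂_{t,ρ} (χ_{[t,∞)}(m) ∂_{t,ρ}^{-1} f) - e^{-2ρt} (∂_{t,ρ}^{-1}f)(t) δ_t, where χ_{[t,∞)}(m) is pointwise multiplication by the indicator of [t,∞) and (∂_{t,ρ}^{-1}f)(t) = ∫_{-∞}^t f(s) ds. -/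
open MeasureTheory

local notation "⟪" x ", " y "⟫" => @inner ℂ _ _ x y

noncomputable def wMeasure (ρ : ℝ) : Measure ℝ :=
  (volume : Measure ℝ).withDensity fun t => ENNReal.ofReal (Real.exp (-2 * ρ * t))

lemma integral_inner_left {H : Type*} [NormedAddCommGroup H] [InnerProductSpace ℂ H]
    [CompleteSpace H] {μ : Measure ℝ} {f : ℝ → H} (hf : Integrable f μ) (c : H) :
    ⟪∫ x, f x ∂μ, c⟫ = ∫ x, ⟪f x, c⟫ ∂μ := by
  calc ⟪∫ x, f x ∂μ, c⟫ = (starRingEnd ℂ) ⟪c, ∫ x, f x ∂μ⟫ := (inner_conj_symm _ _).symm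
    _ = (starRingEnd ℂ) (∫ x, ⟪c, f x⟫ ∂μ) := by rw [integral_inner hf]
    _ = ∫ x, (starRingEnd ℂ) ⟪c, f x⟫ ∂μ := (integral_conj).symm
    _ = ∫ x, ⟪f x, c⟫ ∂μ := by simp_rw [inner_conj_symm]

lemma aux_integrableOn {H : Type*} [NormedAddCommGroup H] [InnerProductSpace ℂ H]
    {ρ : ℝ} (hρ : 0 < ρ) {f : ℝ → H} (hf : MemLp f 2 (wMeasure ρ)) (M : ℝ) :
    IntegrableOn f (Set.Iic M) volume := by
  have hd_meas : Measurable (fun t : ℝ => ENNReal.ofReal (Real.exp (-2 * ρ * t))) :=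
    (Real.measurable_exp.comp (measurable_id.const_mul (-2 * ρ))).ennreal_ofReal
  have hac : (volume : Measure ℝ) ≪ wMeasure ρ :=
    withDensity_absolutelyContinuous' hd_meas.aemeasurable
      (Filter.Eventually.of_forall fun x =>
        (ENNReal.ofReal_pos.mpr (Real.exp_pos _)).ne')
  have hfm : AEStronglyMeasurable f volume := hf.1.mono_ac hac
  -- f ∈ L²(w)  ⇒  x ↦ e^{-ρx} • f x ∈ L²(volume)
  have hsq : Integrable (fun x => ‖f x‖ ^ 2) (wMeasure ρ) :=
    (memLp_two_iff_integrable_sq_norm hf.1).mp hf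
  have hsq' : Integrable (fun x => ‖f x‖ ^ 2 * Real.exp (-2 * ρ * x)) volume := by
    have := (integrable_withDensity_iff hd_meas
      (Filter.Eventually.of_forall fun x => ENNReal.ofReal_lt_top)
      (g := fun x => ‖f x‖ ^ 2)).mp hsq
    simpa [ENNReal.toReal_ofReal (Real.exp_nonneg _)] using this
  set g : ℝ → H := fun r => Real.exp (-(ρ * r)) • f r with hg_def
  have hgm : AEStronglyMeasurable g volume :=
    ((by fun_prop : Continuous fun r : ℝ => Real.exp (-(ρ * r))).aestronglyMeasurable).smul hfm
  have hg : MemLp g 2 volume := by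
    refine (memLp_two_iff_integrable_sq_norm hgm).mpr ?_
    refine hsq'.congr ?_
    refine Filter.Eventually.of_forall fun x => ?_
    have h1 : ‖g x‖ ^ 2 = (Real.exp (-(ρ * x))) ^ 2 * ‖f x‖ ^ 2 := by
      rw [hg_def]; rw [norm_smul, mul_pow, Real.norm_eq_abs, sq_abs]
    have h2 : (Real.exp (-(ρ * x))) ^ 2 = Real.exp (-2 * ρ * x) := by
      rw [pow_two, ← Real.exp_add]; ring_nf
    show ‖f x‖ ^ 2 * Real.exp (-2 * ρ * x) = ‖g x‖ ^ 2
    rw [h1, h2, mul_comm]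
  -- the weight e^{ρ r} is in L² of Iic M
  have hexp2 : IntegrableOn (fun r => Real.exp (2 * ρ * r)) (Set.Iic M) volume := by
    have h2ρ : (0:ℝ) < 2 * ρ := by linarith
    have h1 : Integrable ((Set.Iic (2 * ρ * M)).indicator Real.exp) volume :=
      (integrable_indicator_iff measurableSet_Iic).mpr (integrableOn_exp_Iic _)
    have h2 : Integrable (fun x => ((Set.Iic (2 * ρ * M)).indicator Real.exp) (2 * ρ * x))
        volume := (integrable_comp_mul_left_iff _ h2ρ.ne').mpr h1
    have h3 : Integrable ((Set.Iic M).indicator fun r => Real.exp (2 * ρ * r)) volume := by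
      refine h2.congr (Filter.Eventually.of_forall fun x => ?_)
      show (Set.Iic (2 * ρ * M)).indicator Real.exp (2 * ρ * x)
          = (Set.Iic M).indicator (fun r => Real.exp (2 * ρ * r)) x
      by_cases hx : x ≤ M
      · rw [Set.indicator_of_mem
            (show (2*ρ*x) ∈ Set.Iic (2*ρ*M) from mul_le_mul_of_nonneg_left hx h2ρ.le),
          Set.indicator_of_mem (Set.mem_Iic.mpr hx)]
      · rw [Set.indicator_of_notMem (show (2*ρ*x) ∉ Set.Iic (2*ρ*M) by
            simp only [Set.mem_Iic, not_le] at hx ⊢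
            exact mul_lt_mul_of_pos_left hx h2ρ),
          Set.indicator_of_notMem (by simpa using hx)]
    exact (integrable_indicator_iff measurableSet_Iic).mp h3
  have hφM : MemLp (fun r => Real.exp (ρ * r)) 2 (volume.restrict (Set.Iic M)) := by
    refine (memLp_two_iff_integrable_sq
      ((by fun_prop : Continuous fun r : ℝ => Real.exp (ρ * r)).aestronglyMeasurable)).mpr ?_
    refine (hexp2 : Integrable _ _).congr (Filter.Eventually.of_forall fun x => ?_)
    show Real.exp (2 * ρ * x) = Real.exp (ρ * x) ^ 2
    rw [pow_two, ← Real.exp_add]; ring_nf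
  have hpqr : (1 : ENNReal) / 1 = 1 / 2 + 1 / 2 := by
    rw [ENNReal.add_halves]; norm_num
  have hsmul : MemLp ((fun r => Real.exp (ρ * r)) • g) 1 (volume.restrict (Set.Iic M)) :=
    MemLp.smul (hg.restrict (Set.Iic M)) hφM (hpqr := ⟨by rw [ENNReal.inv_two_add_inv_two, inv_one]⟩)
  rw [memLp_one_iff_integrable] at hsmul
  refine hsmul.congr (Filter.Eventually.of_forall fun x => ?_)
  show Real.exp (ρ * x) • g x = f x
  rw [hg_def]
  simp only [smul_smul, ← Real.exp_add, add_neg_cancel, Real.exp_zero, one_smul]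

/-- Cut-off integration-by-parts formula: for `ρ > 0`, `t ∈ ℝ` and `f ∈ L_{2,ρ}(ℝ;H)`,
with `F = ∂_{t,ρ}^{-1}f`, `F(s) = ∫_{-∞}^s f`, one has in `H^{-1}_ρ(ℝ;H)`
`χ_{[t,∞)}(m) f = ∂_{t,ρ}(χ_{[t,∞)}(m) F) - e^{-2ρt} F(t) δ_t`,
tested against every `φ ∈ C_c^∞(ℝ;H)`, where `⟨∂_{t,ρ}u, φ⟩ = ⟨u, -φ' + 2ρφ⟩_ρ`
and `⟨δ_t y, φ⟩ = ⟨y, φ(t)⟩`. -/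
theorem cutoff_integration_by_parts
    {H : Type*} [NormedAddCommGroup H] [InnerProductSpace ℂ H] [CompleteSpace H]
    (ρ : ℝ) (hρ : 0 < ρ) (t : ℝ) (f : ℝ → H) (hf : MemLp f 2 (wMeasure ρ)) :
    ∀ φ : ℝ → H, ContDiff ℝ (⊤ : ℕ∞) φ → HasCompactSupport φ →
      (∫ s in Set.Ici t, (Real.exp (-2 * ρ * s) : ℂ) * ⟪f s, φ s⟫)
        = (∫ s in Set.Ici t, (Real.exp (-2 * ρ * s) : ℂ) *
            ⟪(∫ r in Set.Iic s, f r), -(deriv φ s) + (2 * ρ) • φ s⟫)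
          - (Real.exp (-2 * ρ * t) : ℂ) * ⟪(∫ r in Set.Iic t, f r), φ t⟫ := by
  intro φ hφ hφc
  have hfint : ∀ M : ℝ, IntegrableOn f (Set.Iic M) volume := aux_integrableOn hρ hf
  have hfm : AEStronglyMeasurable f volume := by
    have hd_meas : Measurable (fun t : ℝ => ENNReal.ofReal (Real.exp (-2 * ρ * t))) :=
      (Real.measurable_exp.comp (measurable_id.const_mul (-2 * ρ))).ennreal_ofReal
    exact hf.1.mono_ac (withDensity_absolutelyContinuous' hd_meas.aemeasurable
      (Filter.Eventually.of_forall fun x => (ENNReal.ofReal_pos.mpr (Real.exp_pos _)).ne'))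
  set e : ℝ → ℝ := fun s => Real.exp (-2 * ρ * s) with he_def
  set ψ : ℝ → H := fun s => e s • φ s with hψ_def
  set dψ : ℝ → H := fun s => e s • deriv φ s + (e s * (-2 * ρ)) • φ s with hdψ_def
  have he_cont : Continuous e := Real.continuous_exp.comp (continuous_const.mul continuous_id)
  have hφ_cont : Continuous φ := hφ.continuous
  have hφd_cont : Continuous (deriv φ) := hφ.continuous_deriv (by simp)
  have he1 : ContDiff ℝ 1 e :=
    (Real.contDiff_exp.comp (contDiff_const.mul contDiff_id)).of_le le_top
  have hψ1 : ContDiff ℝ 1 ψ := he1.smul (hφ.of_le (by simp))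
  have hψc : HasCompactSupport ψ := hφc.smul_left
  have hψ_cont : Continuous ψ := he_cont.smul hφ_cont
  have hdψ_cont : Continuous dψ :=
    (he_cont.smul hφd_cont).add ((he_cont.mul continuous_const).smul hφ_cont)
  have hasD : ∀ s, HasDerivAt ψ (dψ s) s := by
    intro s
    have h1 : HasDerivAt (fun y : ℝ => -2 * ρ * y) (-2 * ρ) s := by
      simpa using (hasDerivAt_id s).const_mul (-2 * ρ)
    have h2 : HasDerivAt e (e s * (-2 * ρ)) s := h1.exp
    have h3 : HasDerivAt φ (deriv φ s) s :=
      ((hφ.differentiable (by simp)) s).hasDerivAt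
    exact h2.smul h3
  have hdψc : HasCompactSupport dψ :=
    (hφc.deriv.smul_left).add (hφc.smul_left)
  -- bounds / support control
  obtain ⟨R, hR⟩ := isBounded_iff_forall_norm_le.mp
    ((hdψc.isCompact.union hψc.isCompact).isBounded)
  set M : ℝ := max t R with hM_def
  have htM : t ≤ M := le_max_left _ _
  have hsup : ∀ x : ℝ, M < x → x ∉ tsupport dψ ∪ tsupport ψ := by
    intro x hx hmem
    have h1 : ‖x‖ ≤ R := hR x hmem
    have h2 : R < x := lt_of_le_of_lt (le_max_right t R) hx
    rw [Real.norm_eq_abs] at h1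
    linarith [le_abs_self x]
  have hdψ0 : ∀ x, M < x → dψ x = 0 := fun x hx =>
    image_eq_zero_of_notMem_tsupport (fun h => hsup x hx (Set.mem_union_left _ h))
  have hψ0 : ∀ x, M < x → ψ x = 0 := fun x hx =>
    image_eq_zero_of_notMem_tsupport (fun h => hsup x hx (Set.mem_union_right _ h))
  obtain ⟨C, hC⟩ := hdψc.exists_bound_of_continuous hdψ_cont
  have hC0 : 0 ≤ C := le_trans (norm_nonneg _) (hC 0)
  obtain ⟨Cψ, hCψ⟩ := hψc.exists_bound_of_continuous hψ_cont
  -- ∫_{[a,∞)} (-dψ) = ψ a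
  have hIci : ∀ a : ℝ, (∫ s in Set.Ici a, -dψ s) = ψ a := by
    intro a
    have h1 : (∫ s in Set.Ioi a, deriv ψ s) = -ψ a :=
      HasCompactSupport.integral_Ioi_deriv_eq hψ1 hψc a
    have h2 : (∫ s in Set.Ioi a, dψ s) = -ψ a := by
      rw [← h1]
      exact integral_congr_ae (Filter.Eventually.of_forall fun s => ((hasD s).deriv).symm)
    rw [integral_Ici_eq_integral_Ioi, integral_neg, h2, neg_neg]
  -- pointwise rewriting of the statement into ψ / dψ form
  have hsmul_inner : ∀ (x y : H) (a : ℝ), (a : ℂ) * ⟪x, y⟫ = ⟪x, a • y⟫ := by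
    intro x y a
    rw [← Complex.coe_smul, inner_smul_right]
  have e2 : ∀ s, (Real.exp (-2 * ρ * s) : ℂ) *
      ⟪(∫ r in Set.Iic s, f r), -(deriv φ s) + (2 * ρ) • φ s⟫
      = ⟪(∫ r in Set.Iic s, f r), -dψ s⟫ := by
    intro s
    rw [hsmul_inner]
    congr 1
    show e s • (-(deriv φ s) + (2 * ρ) • φ s) = -dψ s
    rw [hdψ_def]
    simp only [smul_add, smul_neg, smul_smul, neg_add, neg_smul, neg_neg, mul_neg]
    module
  have e1 : ∀ s, (Real.exp (-2 * ρ * s) : ℂ) * ⟪f s, φ s⟫ = ⟪f s, ψ s⟫ := by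
    intro s; rw [hsmul_inner]
  have e3 : (Real.exp (-2 * ρ * t) : ℂ) * ⟪(∫ r in Set.Iic t, f r), φ t⟫
      = ⟪(∫ r in Set.Iic t, f r), ψ t⟫ := by
    rw [hsmul_inner]
  simp_rw [e1, e2, e3]
  -- the kernel for Fubini
  set A : Set (ℝ × ℝ) := {p : ℝ × ℝ | t ≤ p.1 ∧ p.2 ≤ p.1} with hA_def
  have hA_meas : MeasurableSet A :=
    ((isClosed_le continuous_const continuous_fst).inter
      (isClosed_le continuous_snd continuous_fst)).measurableSet
  set K : ℝ → ℝ → ℂ := fun s r => A.indicator (fun p => ⟪f p.2, -dψ p.1⟫) (s, r) with hK_def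
  have hKuncurry : Function.uncurry K = A.indicator (fun p => ⟪f p.2, -dψ p.1⟫) := rfl
  have hK : Integrable (Function.uncurry K) ((volume : Measure ℝ).prod volume) := by
    rw [hKuncurry]
    have hGmeas : AEStronglyMeasurable (fun p : ℝ × ℝ => ⟪f p.2, -dψ p.1⟫)
        ((volume : Measure ℝ).prod volume) := by
      have hpair : AEStronglyMeasurable (fun p : ℝ × ℝ => (f p.2, -dψ p.1))
          ((volume : Measure ℝ).prod volume) :=
        (hfm.comp_quasiMeasurePreserving Measure.quasiMeasurePreserving_snd).prodMk ((hdψ_cont.neg.comp continuous_fst).aestronglyMeasurable)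
      exact continuous_inner.comp_aestronglyMeasurable hpair
    have hGnn : ∀ p : ℝ × ℝ, 0 ≤ ((Set.Icc t M).indicator (fun _ => C) p.1) *
        ((Set.Iic M).indicator (fun r => ‖f r‖) p.2) :=
      fun p => mul_nonneg (Set.indicator_nonneg (fun _ _ => hC0) _)
        (Set.indicator_nonneg (fun _ _ => norm_nonneg _) _)
    have hdom : Integrable (fun p : ℝ × ℝ => ((Set.Icc t M).indicator (fun _ => C) p.1) *
        ((Set.Iic M).indicator (fun r => ‖f r‖) p.2)) ((volume : Measure ℝ).prod volume) :=
      Integrable.mul_prod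
        ((integrable_indicator_iff measurableSet_Icc).mpr
          (integrableOn_const measure_Icc_lt_top.ne))
        ((integrable_indicator_iff measurableSet_Iic).mpr (hfint M).norm)
    refine Integrable.mono' hdom
      (hGmeas.indicator hA_meas) (Filter.Eventually.of_forall fun p => ?_)
    by_cases hp : p ∈ A
    · rw [Set.indicator_of_mem hp]
      obtain ⟨h1, h2⟩ := hp
      by_cases hp1 : p.1 ≤ M
      · rw [Set.indicator_of_mem (Set.mem_Icc.mpr ⟨h1, hp1⟩),
          Set.indicator_of_mem (Set.mem_Iic.mpr (le_trans h2 hp1))]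
        calc ‖⟪f p.2, -dψ p.1⟫‖ ≤ ‖f p.2‖ * ‖-dψ p.1‖ := norm_inner_le_norm _ _
          _ ≤ ‖f p.2‖ * C := by
              refine mul_le_mul_of_nonneg_left ?_ (norm_nonneg _)
              rw [norm_neg]; exact hC p.1
          _ = C * ‖f p.2‖ := mul_comm _ _
      · rw [hdψ0 p.1 (not_le.mp hp1)]
        simpa using hGnn p
    · rw [Set.indicator_of_notMem hp, norm_zero]
      exact hGnn p
  -- step 1 : the RHS integral as an iterated integral
  have step1 : (∫ s in Set.Ici t, ⟪(∫ r in Set.Iic s, f r), -dψ s⟫)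
      = ∫ s, ∫ r, K s r := by
    rw [← integral_indicator measurableSet_Ici]
    congr 1
    funext s
    by_cases hs : t ≤ s
    · rw [Set.indicator_of_mem (Set.mem_Ici.mpr hs)]
      have hKs : (fun r => K s r) = (Set.Iic s).indicator (fun r => ⟪f r, -dψ s⟫) := by
        funext r
        show A.indicator (fun p => ⟪f p.2, -dψ p.1⟫) (s, r) = _
        by_cases hr : r ≤ s
        · rw [Set.indicator_of_mem (show (s, r) ∈ A from ⟨hs, hr⟩),
            Set.indicator_of_mem (Set.mem_Iic.mpr hr)]
        · rw [Set.indicator_of_notMem (show (s, r) ∉ A from fun h => hr h.2),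
            Set.indicator_of_notMem (by simpa using hr)]
      rw [hKs, integral_indicator measurableSet_Iic,
        ← integral_inner_left (hfint s) (-dψ s)]
    · rw [Set.indicator_of_notMem (by simpa using hs)]
      have : ∀ r, K s r = 0 := by
        intro r
        show A.indicator (fun p => ⟪f p.2, -dψ p.1⟫) (s, r) = 0
        exact Set.indicator_of_notMem (fun h => hs h.1) _
      simp [this]
  -- step 3 : the swapped inner integral
  have step3 : ∀ r, (∫ s, K s r) = ⟪f r, ψ (max t r)⟫ := by
    intro r
    have hKr : (fun s => K s r) = (Set.Ici (max t r)).indicator (fun s => ⟪f r, -dψ s⟫) := by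
      funext s
      show A.indicator (fun p => ⟪f p.2, -dψ p.1⟫) (s, r) = _
      by_cases hsr : max t r ≤ s
      · rw [Set.indicator_of_mem (show (s, r) ∈ A from
            ⟨le_trans (le_max_left _ _) hsr, le_trans (le_max_right _ _) hsr⟩),
          Set.indicator_of_mem (Set.mem_Ici.mpr hsr)]
      · rw [Set.indicator_of_notMem (show (s, r) ∉ A from
            fun h => hsr (max_le h.1 h.2)),
          Set.indicator_of_notMem (by simpa using hsr)]
    have hint_neg : Integrable (fun s => -dψ s)
        (volume.restrict (Set.Ici (max t r))) :=
      ((hdψ_cont.integrable_of_hasCompactSupport hdψc).neg).integrableOn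
    rw [hKr, integral_indicator measurableSet_Ici, integral_inner hint_neg (f r), hIci]
  -- step 4 : splitting the r-integral
  have hFr : Integrable (fun r => ⟪f r, ψ (max t r)⟫) volume := by
    have hmeas4 : AEStronglyMeasurable (fun r => ⟪f r, ψ (max t r)⟫) volume := by
      have hpair : AEStronglyMeasurable (fun r : ℝ => (f r, ψ (max t r))) volume :=
        hfm.prodMk ((hψ_cont.comp (continuous_const.max continuous_id)).aestronglyMeasurable)
      exact continuous_inner.comp_aestronglyMeasurable hpair
    refine Integrable.mono' ((integrable_indicator_iff measurableSet_Iic).mpr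
      (((hfint M).norm.const_mul Cψ))) hmeas4 (Filter.Eventually.of_forall fun r => ?_)
    by_cases hr : r ≤ M
    · rw [Set.indicator_of_mem (Set.mem_Iic.mpr hr)]
      calc ‖⟪f r, ψ (max t r)⟫‖ ≤ ‖f r‖ * ‖ψ (max t r)‖ := norm_inner_le_norm _ _
        _ ≤ ‖f r‖ * Cψ := mul_le_mul_of_nonneg_left (hCψ _) (norm_nonneg _)
        _ = Cψ * ‖f r‖ := mul_comm _ _
    · rw [Set.indicator_of_notMem (by simpa using hr)]
      have hmax : max t r = r := max_eq_right (le_trans htM (not_le.mp hr).le)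
      rw [hmax, hψ0 r (not_le.mp hr), inner_zero_right, norm_zero]
  have step4 : (∫ r, ⟪f r, ψ (max t r)⟫)
      = ⟪(∫ r in Set.Iic t, f r), ψ t⟫ + ∫ r in Set.Ici t, ⟪f r, ψ r⟫ := by
    have h1 : (∫ r in Set.Iio t, ⟪f r, ψ (max t r)⟫) = ⟪(∫ r in Set.Iic t, f r), ψ t⟫ := by
      have h1a : (∫ r in Set.Iio t, ⟪f r, ψ (max t r)⟫) = ∫ r in Set.Iio t, ⟪f r, ψ t⟫ :=
        setIntegral_congr_fun measurableSet_Iio fun r hr => by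
          rw [max_eq_left (le_of_lt hr)]
      rw [h1a, setIntegral_congr_set Iio_ae_eq_Iic, ← integral_inner_left (hfint t) (ψ t)]
    have h2 : (∫ r in Set.Ici t, ⟪f r, ψ (max t r)⟫) = ∫ r in Set.Ici t, ⟪f r, ψ r⟫ :=
      setIntegral_congr_fun measurableSet_Ici fun r hr => by rw [max_eq_right hr]
    rw [← intervalIntegral.integral_Iio_add_Ici (hFr.integrableOn) (hFr.integrableOn), h1, h2]
  rw [step1]
  rw [integral_integral_swap hK]
  rw [integral_congr_ae (Filter.Eventually.of_forall step3)]
  rw [step4]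
  ring
end

section
/- Action of the extended cut-off operator on Dirac distributions: let ρ > 0, y ∈ H, s,t ∈ ℝ. Then δ_s y ∈ dom(P_t) and P_t(δ_s y) = δ_s y if s > t, and P_t(δ_s y) = 0 if s ≤ t. -/
open MeasureTheory

local notation "⟪" x ", " y "⟫" => @inner ℂ _ _ x y

theorem cutoff_key
    {H : Type*} [NormedAddCommGroup H] [InnerProductSpace ℂ H] [CompleteSpace H]
    (ρ : ℝ) (y : H) (φ : ℝ → H) (hφ : ContDiff ℝ (⊤ : ℕ∞) φ) (hφc : HasCompactSupport φ)
    (a : ℝ) :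
    (∫ r in Set.Ici a, (Real.exp (-2 * ρ * r) : ℂ) *
        ⟪y, -(deriv φ r) + (2 * ρ) • φ r⟫)
      = (Real.exp (-2 * ρ * a) : ℂ) * ⟪y, φ a⟫ := by
  set c : ℝ → ℂ := fun r => (Real.exp (-2 * ρ * r) : ℂ) with hc_def
  set g : ℝ → ℂ := fun r => ⟪y, φ r⟫ with hg_def
  set G : ℝ → ℂ := fun r => -(c r * g r) with hG_def
  have hφd : Differentiable ℝ φ := hφ.differentiable (by simp)
  have hc : ∀ r : ℝ, HasDerivAt c ((-(2 * ρ) : ℝ) * c r) r := by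
    intro r
    have h1 : HasDerivAt (fun x : ℝ => -2 * ρ * x) (-2 * ρ) r := by
      simpa using (hasDerivAt_id r).const_mul (-2 * ρ)
    have h2 := (h1.exp).ofReal_comp
    convert h2 using 1
    push_cast [hc_def]
    ring
  set L : H →L[ℝ] ℂ := (innerSL ℂ y).restrictScalars ℝ with hL_def
  have hLapp : ∀ x : H, L x = ⟪y, x⟫ := fun x => rfl
  have hg : ∀ r : ℝ, HasDerivAt g ⟪y, deriv φ r⟫ r := by
    intro r
    have := L.hasFDerivAt.comp_hasDerivAt r (hφd r).hasDerivAt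
    exact this
  have hG : ∀ r : ℝ, HasDerivAt G
      ((Real.exp (-2 * ρ * r) : ℂ) * ⟪y, -(deriv φ r) + (2 * ρ) • φ r⟫) r := by
    intro r
    have h := ((hc r).mul (hg r)).neg
    refine h.congr_deriv ?_
    rw [inner_add_right, inner_neg_right]
    have hsm : (⟪y, (2 * ρ : ℝ) • φ r⟫ : ℂ) = ((2 * ρ : ℝ) : ℂ) * ⟪y, φ r⟫ := by
      rw [RCLike.real_smul_eq_coe_smul (K := ℂ), inner_smul_right]; rfl
    rw [hsm]
    push_cast [hc_def, hg_def]
    ring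
  have hGc : ContDiff ℝ 1 G := by
    have hcc : ContDiff ℝ 1 c := by
      have : ContDiff ℝ 1 (fun r : ℝ => Real.exp (-2 * ρ * r)) :=
        Real.contDiff_exp.comp (contDiff_const.mul contDiff_id)
      exact Complex.ofRealCLM.contDiff.comp this
    have hgc : ContDiff ℝ 1 g := L.contDiff.comp (hφ.of_le (by simp))
    exact (hcc.mul hgc).neg
  have hGsupp : HasCompactSupport G := by
    have hgs : HasCompactSupport g := by
      have : g = (fun x : H => (⟪y, x⟫ : ℂ)) ∘ φ := rfl
      rw [this]
      exact hφc.comp_left (g := fun x : H => (⟪y, x⟫ : ℂ)) (by simp)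
    refine hgs.mono ?_
    rw [Function.support_subset_iff']
    intro r hr
    have : g r = 0 := by simpa [Function.mem_support] using hr
    simp [hG_def, this]
  have hderiv : ∀ r : ℝ, deriv G r =
      (Real.exp (-2 * ρ * r) : ℂ) * ⟪y, -(deriv φ r) + (2 * ρ) • φ r⟫ :=
    fun r => (hG r).deriv
  have h1 := hGsupp.integral_Ioi_deriv_eq hGc a
  rw [MeasureTheory.integral_Ici_eq_integral_Ioi]
  calc (∫ r in Set.Ioi a, (Real.exp (-2 * ρ * r) : ℂ) *
        ⟪y, -(deriv φ r) + (2 * ρ) • φ r⟫)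
      = ∫ r in Set.Ioi a, deriv G r := by
        refine setIntegral_congr_fun measurableSet_Ioi fun r _ => ?_
        rw [hderiv r]
    _ = -G a := h1
    _ = (Real.exp (-2 * ρ * a) : ℂ) * ⟪y, φ a⟫ := by simp [hG_def, hc_def, hg_def]

/-- Action of the extended cut-off operator `P_t` on Dirac distributions: for `ρ > 0`,
`y ∈ H` and `s, t ∈ ℝ`, `δ_s y ∈ dom(P_t)` and `P_t(δ_s y) = δ_s y` if `s > t`, while
`P_t(δ_s y) = 0` if `s ≤ t`.  Since `∂_{t,ρ}^{-1}(δ_s y) = e^{2ρs} χ_{[s,∞)} y` (with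
essential right limit `e^{2ρs}y` at `t` iff `s ≤ t`), tested against `φ ∈ C_c^∞(ℝ;H)`
this reads: `⟨∂_{t,ρ}(χ_{[t,∞)} e^{2ρs}χ_{[s,∞)}y), φ⟩ - e^{-2ρt}⟨(e^{2ρs}χ_{[s,∞)}y)(t+), φ(t)⟩`
equals `⟨y, φ(s)⟩` if `s > t` and `0` otherwise. -/
theorem cutoff_on_dirac
    {H : Type*} [NormedAddCommGroup H] [InnerProductSpace ℂ H] [CompleteSpace H]
    (ρ : ℝ) (hρ : 0 < ρ) (s t : ℝ) (y : H) :
    ∀ φ : ℝ → H, ContDiff ℝ (⊤ : ℕ∞) φ → HasCompactSupport φ →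
      ((Real.exp (2 * ρ * s) : ℂ) *
          ∫ r in Set.Ici (max s t), (Real.exp (-2 * ρ * r) : ℂ) *
            ⟪y, -(deriv φ r) + (2 * ρ) • φ r⟫)
        - (if s ≤ t then (Real.exp (-2 * ρ * t) : ℂ) * ((Real.exp (2 * ρ * s) : ℂ) * ⟪y, φ t⟫)
           else 0)
      = (if t < s then (⟪y, φ s⟫ : ℂ) else 0) := by
  intro φ hφ hφc
  rw [cutoff_key ρ y φ hφ hφc]
  by_cases h : s ≤ t
  · rw [if_pos h, if_neg (not_lt.mpr h), max_eq_right h]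
    ring
  · rw [if_neg h, if_pos (not_le.mp h), max_eq_left (le_of_not_ge h)]
    have : (Real.exp (2 * ρ * s) : ℂ) * (Real.exp (-2 * ρ * s) : ℂ) = 1 := by
      rw [← Complex.ofReal_mul, ← Real.exp_add]
      norm_num
    rw [sub_zero, ← mul_assoc, this, one_mul]
end

section
/- Resolvent power bound for E = 1: let E be a self-adjoint strictly positive definite bounded operator on a Hilbert space H (E ≥ d > 0) and A skew-selfadjoint (A* = -A). Then for all λ > 0 and n ∈ ℕ, ‖((λE+A)^{-1}E)^n‖ ≤ ‖√E‖·‖√(E^{-1})‖ / λ^n. In particular (λE+A)^{-1} exists for λ > 0 and the stated bound holds via the identity ((λE+A)^{-1}E)^n = √(E^{-1}) (λ + √(E^{-1})A√(E^{-1}))^{-n} √E. -/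
/-!
Skewness of `A` gives `Re ⟪w + A x, x⟫ = Re ⟪w, x⟫` on `dom A`, so `λE + A` inherits the
coercivity `λ d ‖x‖²` of `λE` and is bounded below. Its range is closed because `A = -A*` is
closed, and dense because a vector orthogonal to it lies in `dom A* = dom A` and is then killed
by coercivity. For the power bound put `S = √E R √E`: the same identity gives
`λ ‖S y‖² = Re ⟪y, S y⟫`, so `‖S‖ ≤ 1/λ`, and `(RE)ⁿ = G Sⁿ √E` with `G = E⁻¹ √E` a left inverse
of `√E`. Finally `‖G‖² = ‖G G*‖ = ‖E⁻¹‖ = ‖√(E⁻¹)‖²` by the C*-identity.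
-/

local notation "⟪" x ", " y "⟫" => @inner ℂ _ _ x y

open Filter Topology
open scoped InnerProductSpace

theorem mul_le_of_mul_mul_le {a b t : ℝ} (hb : 0 ≤ b) (ht : 0 ≤ t) (h : a * t * t ≤ b * t) :
    a * t ≤ b := by
  rcases ht.eq_or_lt with rfl | ht
  · simpa using hb
  · exact le_of_mul_le_mul_right h ht

theorem AntilipschitzWith.cauchySeq_of_comp {α β : Type*} [PseudoEMetricSpace α]
    [PseudoEMetricSpace β] {K : NNReal} {f : α → β} (hf : AntilipschitzWith K f) {u : ℕ → α}
    (hu : CauchySeq (f ∘ u)) : CauchySeq u := by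
  rw [CauchySeq, ← map_map] at hu
  have : (comap f (map f (map u atTop))).NeBot := NeBot.mono inferInstance le_comap_map
  exact (hu.comap hf.comap_uniformity_le).mono le_comap_map

namespace LinearPMap

variable {𝕜 H : Type*} [RCLike 𝕜] [NormedAddCommGroup H] [InnerProductSpace 𝕜 H]
  [CompleteSpace H] {A : H →ₗ.[𝕜] H}

def IsSkewAdjoint (A : H →ₗ.[𝕜] H) : Prop := A† = -A

namespace IsSkewAdjoint

theorem domain_adjoint (hskew : A.IsSkewAdjoint) : A†.domain = A.domain := by
  rw [hskew]; rfl

theorem adjoint_apply (hskew : A.IsSkewAdjoint) (x : A†.domain) (hx : (x : H) ∈ A.domain) :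
    A† x = -A ⟨x, hx⟩ :=
  (LinearPMap.ext_iff.mp hskew).2 (hg := hx)

theorem inner_apply_left (hA : Dense (A.domain : Set H)) (hskew : A.IsSkewAdjoint)
    (x y : A.domain) : ⟪A x, y⟫_𝕜 = -⟪(x : H), A y⟫_𝕜 := by
  have hx : (x : H) ∈ A†.domain := hskew.domain_adjoint.ge x.2
  have := adjoint_isFormalAdjoint hA ⟨x, hx⟩ y
  rwa [hskew.adjoint_apply _ x.2, inner_neg_left, neg_eq_iff_eq_neg] at this

theorem re_inner_apply_self (hA : Dense (A.domain : Set H)) (hskew : A.IsSkewAdjoint)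
    (x : A.domain) : RCLike.re ⟪A x, x⟫_𝕜 = 0 := by
  have h := congrArg RCLike.re (hskew.inner_apply_left hA x x)
  rw [← inner_conj_symm (x : H) (A x), _root_.map_neg, RCLike.conj_re] at h
  linarith

theorem exists_mem_domain_of_inner (hA : Dense (A.domain : Set H)) (hskew : A.IsSkewAdjoint)
    {v w : H} (h : ∀ u : A.domain, ⟪w, u⟫_𝕜 = ⟪v, A u⟫_𝕜) :
    ∃ hv : v ∈ A.domain, A ⟨v, hv⟩ = -w := by
  have hv : v ∈ A†.domain := mem_adjoint_domain_of_exists v ⟨w, h⟩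
  refine ⟨hskew.domain_adjoint.le hv, ?_⟩
  rw [← neg_neg (A _), ← hskew.adjoint_apply ⟨v, hv⟩, adjoint_apply_eq hA ⟨v, hv⟩ h]

theorem exists_mem_domain_of_tendsto (hA : Dense (A.domain : Set H)) (hskew : A.IsSkewAdjoint)
    {x : ℕ → A.domain} {x₀ z : H} (hx : Tendsto (fun n ↦ (x n : H)) atTop (𝓝 x₀))
    (hAx : Tendsto (fun n ↦ A (x n)) atTop (𝓝 z)) :
    ∃ hx₀ : x₀ ∈ A.domain, A ⟨x₀, hx₀⟩ = z := by
  suffices ∀ u : A.domain, ⟪-z, u⟫_𝕜 = ⟪x₀, A u⟫_𝕜 by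
    simpa using hskew.exists_mem_domain_of_inner hA this
  intro u
  have hlim := (hAx.inner (𝕜 := 𝕜) (tendsto_const_nhds (x := (u : H)))).neg
  simp only [hskew.inner_apply_left hA, neg_neg] at hlim
  rw [inner_neg_left, tendsto_nhds_unique (hx.inner tendsto_const_nhds) hlim]

theorem re_inner_add_apply_self (hA : Dense (A.domain : Set H)) (hskew : A.IsSkewAdjoint)
    (w : H) (x : A.domain) : RCLike.re ⟪w + A x, x⟫_𝕜 = RCLike.re ⟪w, x⟫_𝕜 := by
  rw [inner_add_left, _root_.map_add, hskew.re_inner_apply_self hA, add_zero]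

section Resolvent

variable {B : H →L[𝕜] H}

theorem mul_norm_le_norm_vadd_apply (hA : Dense (A.domain : Set H)) (hskew : A.IsSkewAdjoint)
    {c : ℝ} (hB : ∀ x, c * ‖x‖ ^ 2 ≤ RCLike.re ⟪B x, x⟫_𝕜) (x : A.domain) :
    c * ‖(x : H)‖ ≤ ‖B x + A x‖ := by
  refine mul_le_of_mul_mul_le (norm_nonneg _) (norm_nonneg _) ?_
  calc c * ‖(x : H)‖ * ‖(x : H)‖ = c * ‖(x : H)‖ ^ 2 := by ring
    _ ≤ RCLike.re ⟪B x, x⟫_𝕜 := hB x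
    _ = RCLike.re ⟪B x + A x, x⟫_𝕜 := (hskew.re_inner_add_apply_self hA _ x).symm
    _ ≤ ‖B x + A x‖ * ‖(x : H)‖ := re_inner_le_norm _ _

theorem antilipschitz_vadd (hA : Dense (A.domain : Set H)) (hskew : A.IsSkewAdjoint)
    {c : ℝ} (hc : 0 < c) (hB : ∀ x, c * ‖x‖ ^ 2 ≤ RCLike.re ⟪B x, x⟫_𝕜) :
    AntilipschitzWith c.toNNReal⁻¹ ((B : H →ₗ[𝕜] H) +ᵥ A).toFun := by
  refine AddMonoidHomClass.antilipschitz_of_bound _ fun x ↦ ?_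
  rw [NNReal.coe_inv, Real.coe_toNNReal _ hc.le, inv_mul_eq_div, le_div_iff₀' hc]
  exact hskew.mul_norm_le_norm_vadd_apply hA hB x

theorem isClosed_range_vadd (hA : Dense (A.domain : Set H)) (hskew : A.IsSkewAdjoint)
    {c : ℝ} (hc : 0 < c) (hB : ∀ x, c * ‖x‖ ^ 2 ≤ RCLike.re ⟪B x, x⟫_𝕜) :
    _root_.IsClosed (LinearMap.range ((B : H →ₗ[𝕜] H) +ᵥ A).toFun : Set H) := by
  refine isClosed_of_closure_subset fun y hy ↦ ?_
  obtain ⟨Tu, hTu, hy⟩ := mem_closure_iff_seq_limit.mp hy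
  choose u hu using hTu
  obtain rfl : Tu = ((B : H →ₗ[𝕜] H) +ᵥ A).toFun ∘ u := funext fun n ↦ (hu n).symm
  have hu : CauchySeq fun n ↦ (u n : H) :=
    uniformContinuous_subtype_val.comp_cauchySeq
      ((hskew.antilipschitz_vadd hA hc hB).cauchySeq_of_comp hy.cauchySeq)
  obtain ⟨x, hx⟩ := cauchySeq_tendsto_of_complete hu
  have hAu : Tendsto (fun n ↦ A (u n)) atTop (𝓝 (y - B x)) := by
    convert hy.sub ((B.continuous.tendsto x).comp hx) using 2 with n
    exact (add_sub_cancel_left _ _).symm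
  obtain ⟨hxA, hAx⟩ := hskew.exists_mem_domain_of_tendsto hA hx hAu
  exact ⟨⟨x, hxA⟩, show B x + A ⟨x, hxA⟩ = y by rw [hAx, add_sub_cancel]⟩

theorem orthogonal_range_vadd_eq_bot (hA : Dense (A.domain : Set H)) (hskew : A.IsSkewAdjoint)
    {c : ℝ} (hc : 0 < c) (hB : ∀ x, c * ‖x‖ ^ 2 ≤ RCLike.re ⟪B x, x⟫_𝕜) :
    (LinearMap.range ((B : H →ₗ[𝕜] H) +ᵥ A).toFun)ᗮ = ⊥ := by
  refine (Submodule.eq_bot_iff _).2 fun v hv ↦ ?_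
  have hv : ∀ x : A.domain, ⟪B x + A x, v⟫_𝕜 = 0 := fun x ↦
    Submodule.inner_right_of_mem_orthogonal (LinearMap.mem_range_self _ x) hv
  have hvA : v ∈ A.domain := by
    refine (hskew.exists_mem_domain_of_inner hA (w := -B.adjoint v) fun x ↦ ?_).1
    have hx := hv x
    rw [inner_add_left] at hx
    rw [inner_neg_left, ContinuousLinearMap.adjoint_inner_left, ← inner_conj_symm,
      ← inner_conj_symm v, eq_neg_of_add_eq_zero_right hx, _root_.map_neg]
  have hre : RCLike.re ⟪B v, v⟫_𝕜 = 0 := by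
    rw [← hskew.re_inner_add_apply_self hA _ ⟨v, hvA⟩, hv ⟨v, hvA⟩, _root_.map_zero]
  have hv0 : ‖v‖ ^ 2 ≤ 0 := by nlinarith [hB v]
  exact norm_eq_zero.1 (pow_eq_zero_iff two_ne_zero |>.1 (le_antisymm hv0 (sq_nonneg _)))

theorem exists_inverse_vadd (hA : Dense (A.domain : Set H)) (hskew : A.IsSkewAdjoint)
    {c : ℝ} (hc : 0 < c) (hB : ∀ x, c * ‖x‖ ^ 2 ≤ RCLike.re ⟪B x, x⟫_𝕜) :
    ∃ R : H →L[𝕜] H, (∀ (x : H) (hx : x ∈ A.domain), R (B x + A ⟨x, hx⟩) = x) ∧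
      ∀ y : H, ∃ hy : R y ∈ A.domain, B (R y) + A ⟨R y, hy⟩ = y := by
  set T := ((B : H →ₗ[𝕜] H) +ᵥ A).toFun
  have hsurj : Function.Surjective T := by
    have := (hskew.isClosed_range_vadd hA hc hB).completeSpace_coe
    rw [← LinearMap.range_eq_top, ← Submodule.orthogonal_eq_bot_iff]
    exact hskew.orthogonal_range_vadd_eq_bot hA hc hB
  let e := LinearEquiv.ofBijective T ⟨(hskew.antilipschitz_vadd hA hc hB).injective, hsurj⟩
  let R := (A.domain.subtype ∘ₗ e.symm.toLinearMap).mkContinuous c⁻¹ fun y ↦ by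
    rw [inv_mul_eq_div, le_div_iff₀' hc]
    have hy : B (e.symm y : H) + A (e.symm y) = y := e.apply_symm_apply y
    calc c * ‖(e.symm y : H)‖ ≤ ‖B (e.symm y : H) + A (e.symm y)‖ :=
          hskew.mul_norm_le_norm_vadd_apply hA hB (e.symm y)
      _ = ‖y‖ := by rw [hy]
  exact ⟨R, fun x hx ↦ congrArg Subtype.val (e.symm_apply_apply ⟨x, hx⟩),
    fun y ↦ ⟨(e.symm y).2, e.apply_symm_apply y⟩⟩

end Resolvent

theorem mul_norm_apply_le_norm_of_eq (hA : Dense (A.domain : Set H)) (hskew : A.IsSkewAdjoint)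
    {Q : H →L[𝕜] H} (hQ : IsSelfAdjoint Q) {l : ℝ} {u : A.domain} {y : H}
    (h : (l : 𝕜) • Q (Q u) + A u = Q y) : l * ‖Q u‖ ≤ ‖y‖ := by
  have hQsymm : ∀ x z, ⟪Q x, z⟫_𝕜 = ⟪x, Q z⟫_𝕜 := hQ.isSymmetric
  refine mul_le_of_mul_mul_le (norm_nonneg _) (norm_nonneg _) ?_
  calc l * ‖Q u‖ * ‖Q u‖ = RCLike.re ⟪(l : 𝕜) • Q (Q u), u⟫_𝕜 := by
        rw [inner_smul_real_left, RCLike.smul_re, hQsymm, inner_self_eq_norm_sq]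
        ring
    _ = RCLike.re ⟪y, Q u⟫_𝕜 := by
        rw [← hskew.re_inner_add_apply_self hA _ u, h, hQsymm]
    _ ≤ ‖y‖ * ‖Q u‖ := re_inner_le_norm _ _

end IsSkewAdjoint

end LinearPMap

theorem norm_eq_of_mul_star_eq_mul_self {R : Type*} [NonUnitalNormedRing R] [StarRing R]
    [CStarRing R] {a b : R} (hb : IsSelfAdjoint b) (h : a * star a = b * b) : ‖a‖ = ‖b‖ := by
  rw [← mul_self_inj (norm_nonneg a) (norm_nonneg b), ← CStarRing.norm_self_mul_star, h,
    hb.norm_mul_self, sq]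

theorem norm_pow_mul_le {R : Type*} [SeminormedRing R] (a b : R) (n : ℕ) :
    ‖a ^ n * b‖ ≤ ‖a‖ ^ n * ‖b‖ := by
  induction n with
  | zero => simp
  | succ n ih =>
    rw [pow_succ', mul_assoc, pow_succ', mul_assoc]
    exact (norm_mul_le _ _).trans (by gcongr)

theorem mul_pow_eq_mul_conj_pow_mul {M : Type*} [Monoid M] {r e s g : M} (hgs : g * s = 1)
    (hs : s * s = e) (n : ℕ) : (r * e) ^ n = g * (s * r * s) ^ n * s := by
  induction n with
  | zero => rw [pow_zero, pow_zero, mul_one, hgs]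
  | succ n ih =>
    rw [pow_succ, ih, pow_succ, ← hs]
    simp only [mul_assoc]

theorem resolvent_power_bound_general
    {H : Type*} [NormedAddCommGroup H] [InnerProductSpace ℂ H] [CompleteSpace H]
    (E Einv Es Fs : H →L[ℂ] H) (d : ℝ) (hd : 0 < d)
    (hEpos : ∀ x : H, d * ‖x‖ ^ 2 ≤ (⟪E x, x⟫ : ℂ).re)
    (hEinv2 : Einv.comp E = ContinuousLinearMap.id ℂ H)
    (hEssa : IsSelfAdjoint Es) (hEs2 : Es.comp Es = E)
    (hFssa : IsSelfAdjoint Fs) (hFs2 : Fs.comp Fs = Einv)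
    (A : H →ₗ.[ℂ] H) (hAdense : Dense (A.domain : Set H)) (hskew : A.adjoint = -A) :
    ∀ l : ℝ, 0 < l → ∃ R : H →L[ℂ] H,
      (∀ (x : H) (hx : x ∈ A.domain), R ((l : ℂ) • E x + A ⟨x, hx⟩) = x) ∧
      (∀ y : H, ∃ hy : R y ∈ A.domain, (l : ℂ) • E (R y) + A ⟨R y, hy⟩ = y) ∧
      ∀ n : ℕ, ‖(R.comp E) ^ n‖ ≤ ‖Es‖ * ‖Fs‖ / l ^ n := by
  intro l hl
  have hA : A.IsSkewAdjoint := hskew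
  have hEinvE : Einv * E = 1 := hEinv2
  have hEsEs : Es * Es = E := hEs2
  have hFsFs : Fs * Fs = Einv := hFs2
  have hcoer : ∀ x, l * d * ‖x‖ ^ 2 ≤ RCLike.re ⟪((l : ℂ) • E) x, x⟫ := fun x ↦ by
    rw [smul_apply, inner_smul_left, Complex.conj_ofReal]
    change _ ≤ ((l : ℂ) * _).re
    rw [Complex.re_ofReal_mul, mul_assoc]
    exact mul_le_mul_of_nonneg_left (hEpos x) hl.le
  obtain ⟨R, hRT, hTR⟩ := hA.exists_inverse_vadd hAdense (mul_pos hl hd) hcoer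
  refine ⟨R, hRT, hTR, fun n ↦ ?_⟩
  have hS : ‖Es * R * Es‖ ≤ l⁻¹ := by
    refine ContinuousLinearMap.opNorm_le_bound _ (inv_nonneg.2 hl.le) fun y ↦ ?_
    obtain ⟨hy, hRy⟩ := hTR (Es y)
    rw [← hEs2] at hRy
    rw [inv_mul_eq_div, le_div_iff₀' hl]
    exact hA.mul_norm_apply_le_norm_of_eq hAdense hEssa (l := l) (u := ⟨R (Es y), hy⟩) hRy
  have hG : ‖Einv * Es‖ = ‖Fs‖ := by
    refine norm_eq_of_mul_star_eq_mul_self hFssa ?_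
    rw [star_mul, hEssa.star_eq, mul_assoc, ← mul_assoc Es, hEsEs, ← mul_assoc, hEinvE, one_mul,
      ← hFsFs, star_mul, hFssa.star_eq]
  have hGEs : Einv * Es * Es = 1 := by rw [mul_assoc, hEsEs, hEinvE]
  calc ‖(R.comp E) ^ n‖ = ‖Einv * Es * ((Es * R * Es) ^ n * Es)‖ := by
        rw [← mul_assoc, ← mul_pow_eq_mul_conj_pow_mul hGEs hEsEs]; rfl
    _ ≤ ‖Fs‖ * (l⁻¹ ^ n * ‖Es‖) := by
        refine (norm_mul_le _ _).trans ?_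
        rw [hG]
        gcongr
        exact (norm_pow_mul_le _ _ n).trans (by gcongr)
    _ = ‖Es‖ * ‖Fs‖ / l ^ n := by rw [inv_pow]; ring

/-- Resolvent power bound: let `E` be a bounded selfadjoint operator on a Hilbert space `H`
with `E ≥ d > 0` (so `E` is boundedly invertible with inverse `Einv`, and `Es = √E`,
`Fs = √(E⁻¹)` are the positive selfadjoint square roots), and let `A` be densely defined
and skew-selfadjoint (`A* = -A`).  Then for every `λ > 0` the operator `λE + A` has a
bounded inverse `R`, and `‖((λE+A)^{-1}E)^n‖ ≤ ‖√E‖·‖√(E⁻¹)‖/λ^n` for all `n ∈ ℕ`. -/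
theorem resolvent_power_bound
    {H : Type*} [NormedAddCommGroup H] [InnerProductSpace ℂ H] [CompleteSpace H]
    (E Einv Es Fs : H →L[ℂ] H) (d : ℝ) (hd : 0 < d)
    (hEsa : IsSelfAdjoint E) (hEpos : ∀ x : H, d * ‖x‖ ^ 2 ≤ (⟪E x, x⟫ : ℂ).re)
    (hEinv1 : E.comp Einv = ContinuousLinearMap.id ℂ H)
    (hEinv2 : Einv.comp E = ContinuousLinearMap.id ℂ H)
    (hEssa : IsSelfAdjoint Es) (hEs2 : Es.comp Es = E)
    (hEspos : ∀ x : H, 0 ≤ (⟪Es x, x⟫ : ℂ).re)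
    (hFssa : IsSelfAdjoint Fs) (hFs2 : Fs.comp Fs = Einv)
    (hFspos : ∀ x : H, 0 ≤ (⟪Fs x, x⟫ : ℂ).re)
    (A : H →ₗ.[ℂ] H) (hAdense : Dense (A.domain : Set H)) (hskew : A.adjoint = -A) :
    ∀ l : ℝ, 0 < l → ∃ R : H →L[ℂ] H,
      (∀ (x : H) (hx : x ∈ A.domain), R ((l : ℂ) • E x + A ⟨x, hx⟩) = x) ∧
      (∀ y : H, ∃ hy : R y ∈ A.domain, (l : ℂ) • E (R y) + A ⟨R y, hy⟩ = y) ∧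
      ∀ n : ℕ, ‖(R.comp E) ^ n‖ ≤ ‖Es‖ * ‖Fs‖ / l ^ n :=
  resolvent_power_bound_general E Einv Es Fs d hd hEpos hEinv2 hEssa hEs2 hFssa hFs2 A hAdense hskew
end
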